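/- Let U : C* → C be a reasonable expansion with unique restrictions, where all morphisms of C are mono. Then for every object A of C, t_C(A) ≤ Σ_{𝒜 ∈ U⁻¹(A)} t_{C*}(𝒜). In particular, if U⁻¹(A) is finite and every 𝒜 ∈ U⁻¹(A) has finite Ramsey degree in C*, then A has finite Ramsey degree in C. -/

import Mathlib

open CategoryTheory

universe v u v' u'

def RamseyArrow (C : Type u) [Category.{v} C] (A B Z : C) (k t : ℕ) : Prop :=
  ∀ χ : (A ⟶ Z) → Fin k, ∃ w : B ⟶ Z,
    (Set.range fun f : A ⟶ B => χ (f ≫ w)).ncard ≤ t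

noncomputable def ramseyDeg (C : Type u) [Category.{v} C] (A : C) : ℕ∞ :=
  sInf {n : ℕ∞ | ∃ m : ℕ, n = (m : ℕ∞) ∧ 1 ≤ m ∧
    ∀ k : ℕ, 2 ≤ k → ∀ B : C, ∃ Z : C, RamseyArrow C A B Z k m}

variable {C : Type u} [Category.{v} C] {D : Type u'} [Category.{v'} D]

def InHom (U : D ⥤ C) {A : C} (X Y : D) (h : U.obj X = A) (e : A ⟶ U.obj Y) : Prop :=
  ∃ f : X ⟶ Y, U.map f = eqToHom h ≫ e

def ObjSurjective (U : D ⥤ C) : Prop := ∀ A : C, ∃ X : D, U.obj X = A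

def HomInjective (U : D ⥤ C) : Prop :=
  ∀ (X Y : D) (f g : X ⟶ Y), U.map f = U.map g → f = g

def HasUniqueRestrictions (U : D ⥤ C) : Prop :=
  ∀ (Y : D) (A : C) (e : A ⟶ U.obj Y),
    ∃! X : {Z : D // U.obj Z = A}, InHom U X.1 Y X.2 e

def Reasonable (U : D ⥤ C) : Prop :=
  ∀ (A B : C) (e : A ⟶ B) (X : D) (h : U.obj X = A),
    ∃ (Y : D) (h' : U.obj Y = B) (f : X ⟶ Y),
      U.map f = eqToHom h ≫ e ≫ eqToHom h'.symm

/-!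
By unique restrictions, `hom(A, U B)` is the disjoint union over the expansions `𝒜` of `A` of
the images of `hom(𝒜, ℬ)`. Iterating the Ramsey property of each of the finitely many `𝒜` along
a chain `ℬ → 𝒵₁ → ⋯ → 𝒵ₚ` yields one `w : ℬ ⟶ 𝒵ₚ` which is good for all of them at once, so a
coloring of `hom(A, U 𝒵ₚ)` takes at most `Σ t(𝒜)` values on `U w ∘ hom(A, U ℬ)`. If the fiber
is infinite or some `t(𝒜)` is infinite, the right-hand side is `⊤` and there is nothing to prove.
-/

namespace ENat

variable {ι : Type*}

protected lemma summable (f : ι → ℕ∞) : Summable f :=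
  ⟨_, hasSum_of_isLUB _ (isLUB_iSup (f := fun s : Finset ι => ∑ i ∈ s, f i))⟩

lemma tsum_eq_top_of_one_le [Infinite ι] {f : ι → ℕ∞} (hf : ∀ i, 1 ≤ f i) :
    ∑' i, f i = ⊤ := by
  refine eq_top_iff_forall_ge.2 fun n => ?_
  obtain ⟨s, hs⟩ := Infinite.exists_subset_card_eq ι n
  calc (n : ℕ∞) = ∑ _ ∈ s, 1 := by simp [hs]
    _ ≤ ∑ i ∈ s, f i := Finset.sum_le_sum fun i _ => hf i
    _ ≤ ∑' i, f i := (ENat.summable f).sum_le_tsum s fun _ _ => zero_le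

end ENat

lemma one_le_ramseyDeg (A : C) : 1 ≤ ramseyDeg C A :=
  le_sInf fun _ ⟨_, hn, h1, _⟩ => hn ▸ Nat.one_le_cast.2 h1

lemma ramseyDeg_le {A : C} {m : ℕ} (hm : 1 ≤ m)
    (h : ∀ k : ℕ, 2 ≤ k → ∀ B : C, ∃ Z : C, RamseyArrow C A B Z k m) :
    ramseyDeg C A ≤ m :=
  sInf_le ⟨m, rfl, hm, h⟩

lemma exists_ramseyArrow_of_ramseyDeg_ne_top {A : C} (h : ramseyDeg C A ≠ ⊤) :
    ∃ m : ℕ, ramseyDeg C A = m ∧ 1 ≤ m ∧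
      ∀ k : ℕ, 2 ≤ k → ∀ B : C, ∃ Z : C, RamseyArrow C A B Z k m := by
  let S := {n : ℕ∞ | ∃ m : ℕ, n = m ∧ 1 ≤ m ∧
    ∀ k : ℕ, 2 ≤ k → ∀ B : C, ∃ Z : C, RamseyArrow C A B Z k m}
  have hS : S.Nonempty :=
    Set.nonempty_iff_ne_empty.2 fun he => h ((congrArg sInf he).trans sInf_empty)
  exact csInf_mem hS

lemma exists_ramseyArrow_simultaneous {ι : Type*} {k : ℕ} (obj : ι → C) (m : ι → ℕ)
    (s : Finset ι) (hram : ∀ i ∈ s, ∀ B : C, ∃ Z : C, RamseyArrow C (obj i) B Z k (m i))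
    (B : C) :
    ∃ Z : C, ∀ χ : (i : ι) → (obj i ⟶ Z) → Fin k, ∃ w : B ⟶ Z, ∀ i ∈ s,
      (Set.range fun f : obj i ⟶ B => χ i (f ≫ w)).ncard ≤ m i := by
  classical
  induction s using Finset.induction_on generalizing B with
  | empty => exact ⟨B, fun _ => ⟨𝟙 B, by simp⟩⟩
  | insert j s hj ih =>
    obtain ⟨Z₁, hZ₁⟩ := hram j (Finset.mem_insert_self j s) B
    obtain ⟨Z, hZ⟩ := ih (fun i hi => hram i (Finset.mem_insert_of_mem hi)) Z₁
    refine ⟨Z, fun χ => ?_⟩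
    obtain ⟨w, hw⟩ := hZ χ
    obtain ⟨v, hv⟩ := hZ₁ fun g => χ j (g ≫ w)
    refine ⟨v ≫ w, Finset.forall_mem_insert _ _ _ |>.2 ⟨by simpa using hv, fun i hi => ?_⟩⟩
    refine (Set.ncard_le_ncard ?_ (Set.toFinite _)).trans (hw i hi)
    rintro _ ⟨f, rfl⟩
    exact ⟨f ≫ v, by simp⟩

lemma exists_ramseyArrow_sum_fiber (U : D ⥤ C) (hur : HasUniqueRestrictions U) (A : C)
    [Fintype {X : D // U.obj X = A}] {k : ℕ} (m : {X : D // U.obj X = A} → ℕ)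
    (hram : ∀ X : {X : D // U.obj X = A}, ∀ B : D, ∃ Z : D, RamseyArrow D X.1 B Z k (m X))
    (B : D) :
    ∃ Z : C, RamseyArrow C A (U.obj B) Z k (∑ X, m X) := by
  obtain ⟨Z, hZ⟩ :=
    exists_ramseyArrow_simultaneous (fun X => X.1) m Finset.univ (fun X _ => hram X) B
  refine ⟨U.obj Z, fun χ => ?_⟩
  obtain ⟨w, hw⟩ := hZ fun X g => χ (eqToHom X.2.symm ≫ U.map g)
  refine ⟨U.map w, ?_⟩
  have hcover : (Set.range fun f : A ⟶ U.obj B => χ (f ≫ U.map w)) ⊆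
      ⋃ X : {X : D // U.obj X = A},
        Set.range fun g : X.1 ⟶ B => χ (eqToHom X.2.symm ≫ U.map (g ≫ w)) := by
    rintro _ ⟨f, rfl⟩
    obtain ⟨X, ⟨g, hg⟩, -⟩ := hur B A f
    exact Set.mem_iUnion.2 ⟨X, g, by simp [hg]⟩
  calc _ ≤ _ := Set.ncard_le_ncard hcover (Set.toFinite _)
    _ ≤ _ := Set.ncard_iUnion_le_of_fintype _
    _ ≤ ∑ X, m X := Finset.sum_le_sum fun X _ => hw X (Finset.mem_univ X)

lemma ramseyDeg_le_sum_fiber (U : D ⥤ C) (hsurj : ObjSurjective U)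
    (hur : HasUniqueRestrictions U) (A : C) [Fintype {X : D // U.obj X = A}]
    (hdeg : ∀ X : {X : D // U.obj X = A}, ramseyDeg D X.1 ≠ ⊤) :
    ramseyDeg C A ≤ ∑ X : {X : D // U.obj X = A}, ramseyDeg D X.1 := by
  choose m hm h1 hram using fun X => exists_ramseyArrow_of_ramseyDeg_ne_top (hdeg X)
  obtain ⟨X₀, hX₀⟩ := hsurj A
  simp only [hm, ← Nat.cast_sum]
  refine ramseyDeg_le ((h1 ⟨X₀, hX₀⟩).trans (Finset.single_le_sum (fun _ _ => Nat.zero_le _)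
    (Finset.mem_univ _))) fun k hk B => ?_
  obtain ⟨B', rfl⟩ := hsurj B
  exact exists_ramseyArrow_sum_fiber U hur A m (fun X => hram X k hk) B'

lemma ramseyDeg_le_tsum_fiber (U : D ⥤ C) (hsurj : ObjSurjective U)
    (hur : HasUniqueRestrictions U) (A : C) :
    ramseyDeg C A ≤ ∑' X : {X : D // U.obj X = A}, ramseyDeg D X.1 := by
  by_cases htop : ∃ X : {X : D // U.obj X = A}, ramseyDeg D X.1 = ⊤
  · obtain ⟨X, hX⟩ := htop
    exact le_top.trans (hX ▸ (ENat.summable _).le_tsum' X)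
  push Not at htop
  rcases finite_or_infinite {X : D // U.obj X = A}
  · have := Fintype.ofFinite {X : D // U.obj X = A}
    rw [tsum_fintype]
    exact ramseyDeg_le_sum_fiber U hsurj hur A htop
  · exact le_top.trans_eq (ENat.tsum_eq_top_of_one_le fun X => one_le_ramseyDeg _).symm

theorem stmt18_general (U : D ⥤ C)
    (hsurj : ObjSurjective U)
    (hur : HasUniqueRestrictions U)
    (A : C) :
    ramseyDeg C A ≤ ∑' X : {Z : D // U.obj Z = A}, ramseyDeg D X.1 ∧
    (({Z : D | U.obj Z = A}.Finite ∧
        ∀ X : D, U.obj X = A → ramseyDeg D X ≠ ⊤) →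
      ramseyDeg C A ≠ ⊤) := by
  have hle := ramseyDeg_le_tsum_fiber U hsurj hur A
  refine ⟨hle, fun ⟨hfin, hdeg⟩ => ne_top_of_le_ne_top ?_ hle⟩
  have : Finite {Z : D // U.obj Z = A} := hfin.to_subtype
  have := Fintype.ofFinite {Z : D // U.obj Z = A}
  rw [tsum_fintype, ENat.sum_ne_top]
  exact fun X _ => hdeg X.1 X.2

theorem stmt18 (U : D ⥤ C)
    (hmono : ∀ {X Y : C} (f : X ⟶ Y), Mono f)
    (hsurj : ObjSurjective U) (hinj : HomInjective U)
    (hreas : Reasonable U) (hur : HasUniqueRestrictions U)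
    (A : C) :
    ramseyDeg C A ≤ ∑' X : {Z : D // U.obj Z = A}, ramseyDeg D X.1 ∧
    (({Z : D | U.obj Z = A}.Finite ∧
        ∀ X : D, U.obj X = A → ramseyDeg D X ≠ ⊤) →
      ramseyDeg C A ≠ ⊤) :=
  stmt18_general U hsurj hur A
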